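/- arXiv:2406.18450 — 2 statements merged into one kernel-verified Lean document; each statement's English description precedes it below -/
import Mathlib

section
/- (Telescoping/simulation lemma) Consider a finite-horizon MDP with horizon H, state space S, action space A, two transition kernels T and T̂ from S×A to probability distributions on S, a fixed policy π, and a per-step reward R with trajectory return R(τ) = Σ_t R(s_t, a_t) bounded so that 0 ≤ R(τ) ≤ R_max for every trajectory, with per-state value functions bounded by R_max. Then V^π_{T,R} − V^π_{T̂,R} ≤ E_{τ ∼ d^π_{T̂}} [ Σ_{(s_j,a_j) ∈ τ} ‖T(·|s_j,a_j) − T̂(·|s_j,a_j)‖₁ ] · R_max, where V^π_{T,R} is the expected return of π under kernel T and d^π_{T̂} is the trajectory distribution of π under T̂. -/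
/-!
Write `P` and `Q` for the trajectory distributions under `T` and `That`. Since every
trajectory return lies in `[0, Rmax]`, the value gap is at most `Rmax · ‖P - Q‖₁`.
Extending a trajectory by one step multiplies both distributions by the one-step factors
`T(s'|s,a) π(a'|s')` and `That(s'|s,a) π(a'|s')`, and
`|p a - q b| ≤ |p - q| a + q |a - b|` shows that this adds at most the `Q`-expected
`L1` distance between the two kernels at the last state-action pair. Induction on the
horizon then bounds `‖P - Q‖₁` by the `Q`-expected sum of these distances.
-/

open Finset

variable {S A : Type*}

/-- Probability of a length-`H` trajectory (sequence of state-action pairs) under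
policy `π`, transition kernel `T`, starting from initial state `s₀`. -/
noncomputable def trajProb [Fintype S] [Fintype A] [DecidableEq S]
    (H : ℕ) (hH : 0 < H) (s₀ : S) (T : S → A → S → ℝ) (π : S → A → ℝ)
    (τ : Fin H → S × A) : ℝ :=
  (if (τ ⟨0, hH⟩).1 = s₀ then (1 : ℝ) else 0) *
    (∏ j, π (τ j).1 (τ j).2) *
    ∏ j : Fin (H - 1),
      T (τ (j.castLE (Nat.sub_le H 1))).1 (τ (j.castLE (Nat.sub_le H 1))).2
        (τ ⟨j.val + 1, by have := j.isLt; omega⟩).1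

/-- Trajectory return: sum of per-step rewards. -/
def trajReward (H : ℕ) (R : S → A → ℝ) (τ : Fin H → S × A) : ℝ :=
  ∑ j, R (τ j).1 (τ j).2

/-- L1 (total-variation style) distance between two kernels at `(s, a)`. -/
def tvDist [Fintype S] (T T' : S → A → S → ℝ) (s : S) (a : A) : ℝ :=
  ∑ s', |T s a s' - T' s a s'|

/-- Expected return of policy `π` under kernel `T` and reward `R`. -/
noncomputable def value [Fintype S] [Fintype A] [DecidableEq S] [DecidableEq A]
    (H : ℕ) (hH : 0 < H) (s₀ : S) (T : S → A → S → ℝ) (π : S → A → ℝ)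
    (R : S → A → ℝ) : ℝ :=
  ∑ τ : Fin H → S × A, trajProb H hH s₀ T π τ * trajReward H R τ

theorem Fin.sum_pi_eq_sum_sum_snoc {X M : Type*} [Fintype X] [AddCommMonoid M] {n : ℕ}
    (F : (Fin (n + 1) → X) → M) :
    ∑ τ, F τ = ∑ τ : Fin n → X, ∑ x, F (Fin.snoc τ x) := by
  rw [← (Fin.snocEquiv fun _ => X).sum_comp, Fintype.sum_prod_type, Finset.sum_comm]
  rfl

theorem abs_mul_sub_mul_le {p q a b : ℝ} (ha : 0 ≤ a) (hq : 0 ≤ q) :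
    |p * a - q * b| ≤ |p - q| * a + q * |a - b| := by
  calc |p * a - q * b| = |(p - q) * a + q * (a - b)| := by ring_nf
    _ ≤ |(p - q) * a| + |q * (a - b)| := abs_add_le _ _
    _ = |p - q| * a + q * |a - b| := by rw [abs_mul, abs_mul, abs_of_nonneg ha, abs_of_nonneg hq]

theorem sum_sub_mul_le_sum_abs_sub_mul {ι : Type*} (s : Finset ι) (p q f : ι → ℝ) {M : ℝ}
    (hf : ∀ i ∈ s, f i ∈ Set.Icc 0 M) :
    ∑ i ∈ s, (p i - q i) * f i ≤ (∑ i ∈ s, |p i - q i|) * M := by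
  rw [sum_mul]
  refine sum_le_sum fun i hi => ?_
  calc (p i - q i) * f i ≤ |p i - q i| * f i :=
        mul_le_mul_of_nonneg_right (le_abs_self _) (hf i hi).1
    _ ≤ |p i - q i| * M := mul_le_mul_of_nonneg_left (hf i hi).2 (abs_nonneg _)

section MDP

/-- The factor by which extending a trajectory that ends at `z` by the pair `x` multiplies its
probability. -/
def stepProb (K : S → A → S → ℝ) (π : S → A → ℝ) (z x : S × A) : ℝ :=
  K z.1 z.2 x.1 * π x.1 x.2

theorem stepProb_nonneg {K : S → A → S → ℝ} {π : S → A → ℝ} (hK : ∀ s a s', 0 ≤ K s a s')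
    (hπ : ∀ s a, 0 ≤ π s a) (z x : S × A) : 0 ≤ stepProb K π z x :=
  mul_nonneg (hK _ _ _) (hπ _ _)

variable [Fintype S]

theorem tvDist_nonneg (T T' : S → A → S → ℝ) (s : S) (a : A) : 0 ≤ tvDist T T' s a :=
  sum_nonneg fun _ _ => abs_nonneg _

variable [Fintype A]

theorem sum_stepProb {K : S → A → S → ℝ} {π : S → A → ℝ} (hK : ∀ s a, ∑ s', K s a s' = 1)
    (hπ : ∀ s, ∑ a, π s a = 1) (z : S × A) : ∑ x, stepProb K π z x = 1 := by
  simp only [stepProb, Fintype.sum_prod_type, ← mul_sum, hπ, mul_one, hK]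

theorem sum_abs_stepProb_sub {T T' : S → A → S → ℝ} {π : S → A → ℝ}
    (hπ₀ : ∀ s a, 0 ≤ π s a) (hπ₁ : ∀ s, ∑ a, π s a = 1) (z : S × A) :
    ∑ x, |stepProb T π z x - stepProb T' π z x| = tvDist T T' z.1 z.2 := by
  simp only [stepProb, ← sub_mul, abs_mul, abs_of_nonneg (hπ₀ _ _), Fintype.sum_prod_type,
    ← mul_sum, hπ₁, mul_one, tvDist]

variable [DecidableEq S] (s₀ : S)

theorem trajProb_nonneg {K : S → A → S → ℝ} {π : S → A → ℝ} (hK : ∀ s a s', 0 ≤ K s a s')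
    (hπ : ∀ s a, 0 ≤ π s a) {H : ℕ} (hH : 0 < H) (τ : Fin H → S × A) :
    0 ≤ trajProb H hH s₀ K π τ := by
  refine mul_nonneg (mul_nonneg ?_ (prod_nonneg fun _ _ => hπ _ _))
    (prod_nonneg fun _ _ => hK _ _ _)
  split_ifs <;> norm_num

theorem trajProb_one_eq (K K' : S → A → S → ℝ) (π : S → A → ℝ) (τ : Fin 1 → S × A) :
    trajProb 1 one_pos s₀ K π τ = trajProb 1 one_pos s₀ K' π τ := by
  simp [trajProb]

theorem trajProb_snoc (K : S → A → S → ℝ) (π : S → A → ℝ) {n : ℕ} (τ : Fin (n + 1) → S × A)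
    (x : S × A) :
    trajProb (n + 2) (by omega) s₀ K π (Fin.snoc τ x) =
      trajProb (n + 1) n.succ_pos s₀ K π τ * stepProb K π (τ (Fin.last n)) x := by
  set τ' : Fin (n + 2) → S × A := Fin.snoc τ x
  have hinit : τ' ⟨0, by omega⟩ = τ ⟨0, n.succ_pos⟩ :=
    Fin.snoc_castSucc (α := fun _ => S × A) x τ 0
  have hpolicy : ∏ j, π (τ' j).1 (τ' j).2 = (∏ j, π (τ j).1 (τ j).2) * π x.1 x.2 := by
    rw [Fin.prod_univ_castSucc]
    simp only [τ', Fin.snoc_castSucc, Fin.snoc_last]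
  -- both products are indexed exactly as in `trajProb`, by `Fin (n + 2 - 1)` and `Fin (n + 1 - 1)`
  have hkernel : ∏ j : Fin (n + 2 - 1),
      K (τ' (j.castLE (by omega))).1 (τ' (j.castLE (by omega))).2 (τ' ⟨j + 1, by omega⟩).1 =
      (∏ j : Fin (n + 1 - 1),
        K (τ (j.castLE (by omega))).1 (τ (j.castLE (by omega))).2 (τ ⟨j + 1, by omega⟩).1) *
        K (τ (Fin.last n)).1 (τ (Fin.last n)).2 x.1 := by
    refine (Fin.prod_univ_castSucc (n := n) _).trans ?_
    congr 1
    · refine prod_congr rfl fun j _ => ?_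
      have hsrc : τ' (j.castSucc.castLE (by omega)) = τ (j.castLE (by omega)) :=
        Fin.snoc_castSucc (α := fun _ => S × A) x τ _
      have htgt : τ' ⟨j.castSucc + 1, by omega⟩ = τ ⟨j + 1, by omega⟩ :=
        Fin.snoc_castSucc (α := fun _ => S × A) x τ ⟨j + 1, by omega⟩
      rw [hsrc, htgt]
    · have hsrc : τ' ((Fin.last n).castLE (by omega)) = τ (Fin.last n) :=
        Fin.snoc_castSucc (α := fun _ => S × A) x τ _
      have htgt : τ' ⟨(Fin.last n : ℕ) + 1, by omega⟩ = x :=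
        Fin.snoc_last (α := fun _ => S × A) x τ
      rw [hsrc, htgt]
  unfold trajProb stepProb
  rw [hinit, hpolicy, hkernel]
  ring

theorem sum_abs_trajProb_sub_le {T T' : S → A → S → ℝ} {π : S → A → ℝ}
    (hT₀ : ∀ s a s', 0 ≤ T s a s') (hT₁ : ∀ s a, ∑ s', T s a s' = 1)
    (hT'₀ : ∀ s a s', 0 ≤ T' s a s') (hT'₁ : ∀ s a, ∑ s', T' s a s' = 1)
    (hπ₀ : ∀ s a, 0 ≤ π s a) (hπ₁ : ∀ s, ∑ a, π s a = 1) (n : ℕ) :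
    ∑ τ : Fin (n + 1) → S × A,
        |trajProb (n + 1) n.succ_pos s₀ T π τ - trajProb (n + 1) n.succ_pos s₀ T' π τ| ≤
      ∑ τ : Fin (n + 1) → S × A, trajProb (n + 1) n.succ_pos s₀ T' π τ *
        ∑ j : Fin n, tvDist T T' (τ j.castSucc).1 (τ j.castSucc).2 := by
  induction n with
  | zero => simp [trajProb_one_eq s₀ T T']
  | succ n ih =>
    set P := trajProb (n + 1) n.succ_pos s₀ T π
    set Q := trajProb (n + 1) n.succ_pos s₀ T' π
    have hQ : ∀ τ, 0 ≤ Q τ := trajProb_nonneg s₀ hT'₀ hπ₀ n.succ_pos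
    calc _ = ∑ τ, ∑ x, |P τ * stepProb T π (τ (Fin.last n)) x -
              Q τ * stepProb T' π (τ (Fin.last n)) x| := by
          rw [Fin.sum_pi_eq_sum_sum_snoc]
          simp only [trajProb_snoc, P, Q]
      _ ≤ ∑ τ, ∑ x, (|P τ - Q τ| * stepProb T π (τ (Fin.last n)) x +
              Q τ * |stepProb T π (τ (Fin.last n)) x - stepProb T' π (τ (Fin.last n)) x|) := by
          gcongr with τ _ x _
          exact abs_mul_sub_mul_le (stepProb_nonneg hT₀ hπ₀ _ _) (hQ τ)
      _ = ∑ τ, |P τ - Q τ| +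
            ∑ τ, Q τ * tvDist T T' (τ (Fin.last n)).1 (τ (Fin.last n)).2 := by
          simp only [sum_add_distrib, ← mul_sum, sum_stepProb hT₁ hπ₁,
            sum_abs_stepProb_sub hπ₀ hπ₁, mul_one]
      _ ≤ ∑ τ, Q τ * ∑ j : Fin (n + 1), tvDist T T' (τ j).1 (τ j).2 := by
          simp only [Fin.sum_univ_castSucc (M := ℝ) (n := n), mul_add, sum_add_distrib]
          gcongr
      _ = _ := by
          rw [Fin.sum_pi_eq_sum_sum_snoc (M := ℝ) (n := n + 1)]
          refine sum_congr rfl fun τ _ => ?_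
          simp only [trajProb_snoc, Fin.snoc_castSucc]
          rw [← sum_mul, ← mul_sum, sum_stepProb hT'₁ hπ₁, mul_one]

end MDP

theorem telescoping_lemma_general [Fintype S] [Fintype A] [DecidableEq S] [DecidableEq A]
    (H : ℕ) (hH : 0 < H) (s₀ : S) (T That : S → A → S → ℝ) (π : S → A → ℝ)
    (R : S → A → ℝ) (Rmax : ℝ) (hRmax : 0 ≤ Rmax)
    (hT : ∀ s a, (∀ s', 0 ≤ T s a s') ∧ ∑ s', T s a s' = 1)
    (hThat : ∀ s a, (∀ s', 0 ≤ That s a s') ∧ ∑ s', That s a s' = 1)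
    (hπ : ∀ s, (∀ a, 0 ≤ π s a) ∧ ∑ a, π s a = 1)
    (hR : ∀ τ : Fin H → S × A, trajReward H R τ ∈ Set.Icc 0 Rmax) :
    value H hH s₀ T π R - value H hH s₀ That π R ≤
      (∑ τ : Fin H → S × A, trajProb H hH s₀ That π τ *
        ∑ j, tvDist T That (τ j).1 (τ j).2) * Rmax := by
  obtain ⟨n, rfl⟩ : ∃ n, H = n + 1 := ⟨H - 1, by omega⟩
  calc value (n + 1) hH s₀ T π R - value (n + 1) hH s₀ That π R
      = ∑ τ, (trajProb (n + 1) hH s₀ T π τ - trajProb (n + 1) hH s₀ That π τ) *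
          trajReward (n + 1) R τ := by
        simp only [value, ← sum_sub_distrib, sub_mul]
    _ ≤ (∑ τ, |trajProb (n + 1) hH s₀ T π τ - trajProb (n + 1) hH s₀ That π τ|) * Rmax :=
        sum_sub_mul_le_sum_abs_sub_mul _ _ _ _ fun τ _ => hR τ
    _ ≤ (∑ τ, trajProb (n + 1) hH s₀ That π τ *
          ∑ j : Fin n, tvDist T That (τ j.castSucc).1 (τ j.castSucc).2) * Rmax := by
        refine mul_le_mul_of_nonneg_right ?_ hRmax
        exact sum_abs_trajProb_sub_le s₀ (fun s a => (hT s a).1) (fun s a => (hT s a).2)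
          (fun s a => (hThat s a).1) (fun s a => (hThat s a).2) (fun s => (hπ s).1)
          (fun s => (hπ s).2) n
    _ ≤ _ := by
        gcongr with τ _
        · exact trajProb_nonneg s₀ (fun s a => (hThat s a).1) (fun s => (hπ s).1) hH τ
        · rw [Fin.sum_univ_castSucc]
          exact le_add_of_nonneg_right (tvDist_nonneg _ _ _ _)

/-- Telescoping / simulation lemma. -/
theorem telescoping_lemma [Fintype S] [Fintype A] [DecidableEq S] [DecidableEq A]
    (H : ℕ) (hH : 0 < H) (s₀ : S) (T That : S → A → S → ℝ) (π : S → A → ℝ)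
    (R : S → A → ℝ) (Rmax : ℝ) (hRmax : 0 ≤ Rmax)
    (hT : ∀ s a, (∀ s', 0 ≤ T s a s') ∧ ∑ s', T s a s' = 1)
    (hThat : ∀ s a, (∀ s', 0 ≤ That s a s') ∧ ∑ s', That s a s' = 1)
    (hπ : ∀ s, (∀ a, 0 ≤ π s a) ∧ ∑ a, π s a = 1)
    (hRnonneg : ∀ s a, 0 ≤ R s a)
    (hR : ∀ τ : Fin H → S × A, trajReward H R τ ∈ Set.Icc 0 Rmax) :
    value H hH s₀ T π R - value H hH s₀ That π R ≤
      (∑ τ : Fin H → S × A, trajProb H hH s₀ That π τ *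
        ∑ j, tvDist T That (τ j).1 (τ j).2) * Rmax :=
  telescoping_lemma_general H hH s₀ T That π R Rmax hRmax hT hThat hπ hR
end

section
/- (Value gap expressed via preference gap) Let d₁ and d₂ be trajectory distributions and let R, R̂ be trajectory reward functions with values in [0, R_max]. Let σ be the sigmoid and κ = sup_{r∈[−R_max,R_max]} 1/σ'(r). Then E_{τ₁∼d₁, τ₂∼d₂}[(R(τ₁) − R(τ₂)) − (R̂(τ₁) − R̂(τ₂))] ≤ κ · E_{τ₁∼d₁, τ₂∼d₂}[ |σ(R(τ₁)−R(τ₂)) − σ(R̂(τ₁)−R̂(τ₂))| ]. -/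
/-
By the mean value theorem, σ(a) - σ(b) = σ'(c) (a - b) for some c between a and b,
so a - b ≤ (1 / σ'(c)) |σ(a) - σ(b)| ≤ κ |σ(a) - σ(b)| as long as a, b (hence c) lie in
[-R_max, R_max]. Reward differences do, so the bound holds pointwise, and averaging it against
the nonnegative weights d₁(τ₁) d₂(τ₂) gives the claim.
-/

noncomputable def sigmoid (x : ℝ) : ℝ := 1 / (1 + Real.exp (-x))

open Set

theorem sub_le_mul_abs_sub_of_one_div_deriv_le {f f' : ℝ → ℝ} {s : Set ℝ} [s.OrdConnected]
    {κ a b : ℝ} (hf : ∀ x ∈ s, HasDerivAt f (f' x) x) (hf'_pos : ∀ x ∈ s, 0 < f' x)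
    (hκ : ∀ x ∈ s, 1 / f' x ≤ κ) (ha : a ∈ s) (hb : b ∈ s) :
    a - b ≤ κ * |f a - f b| := by
  have hκ_nonneg : 0 ≤ κ := (one_div_pos.2 (hf'_pos a ha)).le.trans (hκ a ha)
  rcases le_or_gt a b with hab | hba
  · exact (sub_nonpos.2 hab).trans (mul_nonneg hκ_nonneg (abs_nonneg _))
  have hIcc : Icc b a ⊆ s := Set.OrdConnected.out ‹_› hb ha
  obtain ⟨c, hc, hslope⟩ := exists_hasDerivAt_eq_slope f f' hba
    (fun x hx => (hf x (hIcc hx)).continuousAt.continuousWithinAt)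
    (fun x hx => hf x (hIcc (Ioo_subset_Icc_self hx)))
  have hcs : c ∈ s := hIcc (Ioo_subset_Icc_self hc)
  have hmvt : f a - f b = f' c * (a - b) := by
    rw [hslope]; field_simp [(sub_pos.2 hba).ne']
  have hfab : 0 ≤ f a - f b := hmvt ▸ mul_nonneg (hf'_pos c hcs).le (sub_pos.2 hba).le
  calc a - b = 1 / f' c * (f a - f b) := by rw [hmvt]; field_simp [(hf'_pos c hcs).ne']
    _ ≤ κ * |f a - f b| := by
      rw [abs_of_nonneg hfab]; exact mul_le_mul_of_nonneg_right (hκ c hcs) hfab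

theorem sigmoid_eq_real_sigmoid : sigmoid = Real.sigmoid :=
  funext fun _ => one_div _

theorem deriv_sigmoid_pos (x : ℝ) : 0 < deriv sigmoid x := by
  rw [sigmoid_eq_real_sigmoid, Real.deriv_sigmoid]
  exact mul_pos (Real.sigmoid_pos x) (sub_pos.2 (Real.sigmoid_lt_one x))

theorem sub_le_mul_abs_sigmoid_sub {s : Set ℝ} [s.OrdConnected] {κ a b : ℝ}
    (hκ : κ ∈ upperBounds ((fun r => 1 / deriv sigmoid r) '' s)) (ha : a ∈ s) (hb : b ∈ s) :
    a - b ≤ κ * |sigmoid a - sigmoid b| := by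
  have hdiff : Differentiable ℝ sigmoid := sigmoid_eq_real_sigmoid ▸ differentiable_sigmoid
  exact sub_le_mul_abs_sub_of_one_div_deriv_le (fun x _ => (hdiff x).hasDerivAt)
    (fun x _ => deriv_sigmoid_pos x) (fun x hx => hκ ⟨x, hx, rfl⟩) ha hb

theorem sub_mem_Icc_neg_of_mem_Icc_zero {M a b : ℝ} (ha : a ∈ Icc 0 M) (hb : b ∈ Icc 0 M) :
    a - b ∈ Icc (-M) M :=
  ⟨by linarith [ha.1, hb.2], by linarith [ha.2, hb.1]⟩

theorem value_gap_via_preference_gap_general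
    {Traj : Type*} [Fintype Traj]
    (d₁ d₂ : Traj → ℝ) (R Rhat : Traj → ℝ) (Rmax κ : ℝ)
    (hd₁ : (∀ τ, 0 ≤ d₁ τ) ∧ ∑ τ, d₁ τ = 1)
    (hd₂ : (∀ τ, 0 ≤ d₂ τ) ∧ ∑ τ, d₂ τ = 1)
    (hR : ∀ τ, R τ ∈ Set.Icc 0 Rmax) (hRhat : ∀ τ, Rhat τ ∈ Set.Icc 0 Rmax)
    (hκ : IsLUB ((fun r => 1 / deriv sigmoid r) '' Set.Icc (-Rmax) Rmax) κ) :
    (∑ τ₁, ∑ τ₂, d₁ τ₁ * d₂ τ₂ *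
        ((R τ₁ - R τ₂) - (Rhat τ₁ - Rhat τ₂))) ≤
      κ * ∑ τ₁, ∑ τ₂, d₁ τ₁ * d₂ τ₂ *
        |sigmoid (R τ₁ - R τ₂) - sigmoid (Rhat τ₁ - Rhat τ₂)| := by
  have hgap : ∀ τ₁ τ₂, (R τ₁ - R τ₂) - (Rhat τ₁ - Rhat τ₂) ≤
      κ * |sigmoid (R τ₁ - R τ₂) - sigmoid (Rhat τ₁ - Rhat τ₂)| := fun τ₁ τ₂ =>
    sub_le_mul_abs_sigmoid_sub hκ.1 (sub_mem_Icc_neg_of_mem_Icc_zero (hR τ₁) (hR τ₂))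
      (sub_mem_Icc_neg_of_mem_Icc_zero (hRhat τ₁) (hRhat τ₂))
  calc (∑ τ₁, ∑ τ₂, d₁ τ₁ * d₂ τ₂ * ((R τ₁ - R τ₂) - (Rhat τ₁ - Rhat τ₂)))
      ≤ ∑ τ₁, ∑ τ₂, d₁ τ₁ * d₂ τ₂ *
          (κ * |sigmoid (R τ₁ - R τ₂) - sigmoid (Rhat τ₁ - Rhat τ₂)|) := by
        gcongr with τ₁ _ τ₂ _
        · exact mul_nonneg (hd₁.1 τ₁) (hd₂.1 τ₂)
        · exact hgap τ₁ τ₂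
    _ = κ * ∑ τ₁, ∑ τ₂, d₁ τ₁ * d₂ τ₂ *
          |sigmoid (R τ₁ - R τ₂) - sigmoid (Rhat τ₁ - Rhat τ₂)| := by
        simp only [Finset.mul_sum, mul_left_comm κ]

/-- Value gap expressed via preference gap, through the mean-value constant κ. -/
theorem value_gap_via_preference_gap
    {Traj : Type*} [Fintype Traj]
    (d₁ d₂ : Traj → ℝ) (R Rhat : Traj → ℝ) (Rmax κ : ℝ) (hRmax : 0 < Rmax)
    (hd₁ : (∀ τ, 0 ≤ d₁ τ) ∧ ∑ τ, d₁ τ = 1)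
    (hd₂ : (∀ τ, 0 ≤ d₂ τ) ∧ ∑ τ, d₂ τ = 1)
    (hR : ∀ τ, R τ ∈ Set.Icc 0 Rmax) (hRhat : ∀ τ, Rhat τ ∈ Set.Icc 0 Rmax)
    (hκ : IsLUB ((fun r => 1 / deriv sigmoid r) '' Set.Icc (-Rmax) Rmax) κ) :
    (∑ τ₁, ∑ τ₂, d₁ τ₁ * d₂ τ₂ *
        ((R τ₁ - R τ₂) - (Rhat τ₁ - Rhat τ₂))) ≤
      κ * ∑ τ₁, ∑ τ₂, d₁ τ₁ * d₂ τ₂ *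
        |sigmoid (R τ₁ - R τ₂) - sigmoid (Rhat τ₁ - Rhat τ₂)| :=
  value_gap_via_preference_gap_general d₁ d₂ R Rhat Rmax κ hd₁ hd₂ hR hRhat hκ
end
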